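/- For a product ensemble E = ⊗_l E^l, any x⃗, and any E ∈ M_x⃗(E), the compression Π E Π is invariant under conjugation by ⊗_l Π_{x_l}^⊥: (⊗_l Π_{x_l}^⊥) (Π E Π) (⊗_l Π_{x_l}^⊥) = Π E Π, where Π is the projection onto the support of ρ₀ = ⊗_l ρ₀^l and Π_{x_l}^⊥ is the projection onto the kernel of C_{x_l}(E^l) ρ₀^l − η_{x_l}^l ρ_{x_l}^l. -/

import Mathlib

open Matrix BigOperators
open scoped ComplexOrder

/-!
Write `a_l = C_{x_l} ρ₀^l`, `b_l = η_{x_l} ρ_{x_l}^l` and `A_l = a_l - b_l ⪰ 0`. For each slot `l`,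
`⊗a - ⊗b` is the sum of `a_1 ⊗ ⋯ ⊗ A_l ⊗ ⋯ ⊗ a_L` and of `(a_1 ⊗ ⋯ ⊗ b_l ⊗ ⋯ ⊗ a_L) - ⊗b`, both
positive semidefinite, so `Tr[(⊗a - ⊗b) E] = 0` forces `(a_1 ⊗ ⋯ ⊗ A_l ⊗ ⋯ ⊗ a_L) E = 0`.
Since `Π(E^l)` has the kernel of `a_l`, it factors as `R_l a_l`, which turns this into
`(1 ⊗ ⋯ ⊗ A_l ⊗ ⋯ ⊗ 1) Π E Π = 0`; and `1 - Π_{x_l}^⊥` factors through `A_l`, so the slot-`l`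
factor of `⊗ Π_{x_l}^⊥` fixes `Π E Π`. Multiplying over the slots and taking adjoints concludes.
-/

/-- L-fold tensor (Kronecker) product of square complex matrices, realized on the
index type ∀ l, Fin (d l). -/
def tens {L : ℕ} {d : Fin L → ℕ}
    (X : ∀ l, Matrix (Fin (d l)) (Fin (d l)) ℂ) :
    Matrix (∀ l, Fin (d l)) (∀ l, Fin (d l)) ℂ :=
  Matrix.of fun a b => ∏ l, X l (a l) (b l)

namespace Matrix

section Kernel

variable {K : Type*} [Field K] {k m n : Type*} [Fintype n]

theorem exists_eq_mul_of_ker_le [Fintype m] [DecidableEq m] {X : Matrix m n K} {Y : Matrix k n K}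
    (h : LinearMap.ker X.mulVecLin ≤ LinearMap.ker Y.mulVecLin) :
    ∃ R : Matrix k m K, Y = R * X := by
  set f := X.mulVecLin
  obtain ⟨g, hg⟩ := LinearMap.exists_extend
    ((LinearMap.ker f).liftQ Y.mulVecLin h ∘ₗ f.quotKerEquivRange.symm.toLinearMap)
  refine ⟨LinearMap.toMatrix' g, ext_iff_mulVec.2 fun v => ?_⟩
  have hv := LinearMap.congr_fun hg ⟨f v, LinearMap.mem_range_self f v⟩
  rw [← mulVec_mulVec, LinearMap.toMatrix'_mulVec]
  simp only [LinearMap.comp_apply, LinearEquiv.coe_coe, Submodule.subtype_apply,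
    LinearMap.quotKerEquivRange_symm_apply_image, Submodule.mkQ_apply, Submodule.liftQ_apply] at hv
  exact hv.symm

theorem mul_eq_self_of_ker_le {P : Matrix n n K} {X : Matrix m n K} (hP : P * P = P)
    (h : LinearMap.ker P.mulVecLin ≤ LinearMap.ker X.mulVecLin) : X * P = X := by
  refine ext_iff_mulVec.2 fun v => ?_
  have hker : v - P *ᵥ v ∈ LinearMap.ker P.mulVecLin := by
    simp [mulVec_sub, mulVec_mulVec, hP]
  have hXv := h hker
  simp only [LinearMap.mem_ker, mulVecLin_apply, mulVec_sub, sub_eq_zero] at hXv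
  rw [← mulVec_mulVec, hXv]

end Kernel

variable {𝕜 : Type*} [RCLike 𝕜] {n : Type*} [Fintype n]

theorem IsHermitian.ker_le_ker_of_range_le {M N : Matrix n n 𝕜} (hM : M.IsHermitian)
    (hN : N.IsHermitian) (h : LinearMap.range M.mulVecLin ≤ LinearMap.range N.mulVecLin) :
    LinearMap.ker N.mulVecLin ≤ LinearMap.ker M.mulVecLin := by
  intro v hv
  rw [LinearMap.mem_ker, mulVecLin_apply] at hv ⊢
  obtain ⟨u, hu⟩ := h ⟨M *ᵥ v, rfl⟩
  rw [mulVecLin_apply, mulVecLin_apply] at hu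
  rw [← dotProduct_star_self_eq_zero, star_mulVec, ← dotProduct_mulVec, hM.eq, ← hu,
    dotProduct_mulVec, ← hN.eq, ← star_mulVec, hv, star_zero, zero_dotProduct]

theorem PosSemidef.ker_le_ker_of_sub {A B : Matrix n n 𝕜} (hB : B.PosSemidef)
    (hAB : (A - B).PosSemidef) : LinearMap.ker A.mulVecLin ≤ LinearMap.ker B.mulVecLin := by
  intro v hv
  rw [LinearMap.mem_ker, mulVecLin_apply] at hv ⊢
  have hle := hAB.dotProduct_mulVec_nonneg v
  rw [sub_mulVec, hv, dotProduct_sub, dotProduct_zero, zero_sub, neg_nonneg] at hle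
  exact (hB.dotProduct_mulVec_zero_iff v).1 (le_antisymm hle (hB.dotProduct_mulVec_nonneg v))

theorem trace_star_mul_self_mul_star_mul_self (S T : Matrix n n 𝕜) :
    (star S * S * (star T * T)).trace = (star (S * star T) * (S * star T)).trace := by
  rw [star_mul, star_star]
  simp only [mul_assoc]
  rw [trace_mul_comm T]
  simp only [mul_assoc]

open scoped MatrixOrder in
theorem PosSemidef.trace_mul_nonneg [DecidableEq n] {A B : Matrix n n 𝕜} (hA : A.PosSemidef)
    (hB : B.PosSemidef) : 0 ≤ (A * B).trace := by
  obtain ⟨S, rfl⟩ := CStarAlgebra.nonneg_iff_eq_star_mul_self.mp hA.nonneg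
  obtain ⟨T, rfl⟩ := CStarAlgebra.nonneg_iff_eq_star_mul_self.mp hB.nonneg
  rw [trace_star_mul_self_mul_star_mul_self]
  exact (posSemidef_conjTranspose_mul_self _).trace_nonneg

open scoped MatrixOrder in
theorem PosSemidef.mul_eq_zero_of_trace_mul_eq_zero [DecidableEq n] {A B : Matrix n n 𝕜}
    (hA : A.PosSemidef) (hB : B.PosSemidef) (h : (A * B).trace = 0) : A * B = 0 := by
  obtain ⟨S, rfl⟩ := CStarAlgebra.nonneg_iff_eq_star_mul_self.mp hA.nonneg
  obtain ⟨T, rfl⟩ := CStarAlgebra.nonneg_iff_eq_star_mul_self.mp hB.nonneg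
  rw [trace_star_mul_self_mul_star_mul_self] at h
  replace h := trace_conjTranspose_mul_self_eq_zero_iff.1 h
  calc star S * S * (star T * T) = star S * (S * star T) * T := by simp only [mul_assoc]
    _ = 0 := by rw [h, mul_zero, zero_mul]

theorem le_of_posSemidef_smul_sub_smul {A B : Matrix n n ℂ}
    (hA : A.trace = 1) (hB : B.trace = 1) {s t : ℝ}
    (h : ((s : ℂ) • A - (t : ℂ) • B).PosSemidef) : t ≤ s := by
  have htr := h.trace_nonneg
  rw [trace_sub, trace_smul, trace_smul, hA, hB, smul_eq_mul, smul_eq_mul, mul_one, mul_one,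
    ← Complex.ofReal_sub, Complex.zero_le_real] at htr
  linarith

end Matrix

section TensorProduct

open Function

variable {L : ℕ} {d : Fin L → ℕ}

theorem tens_mul (X Y : ∀ l, Matrix (Fin (d l)) (Fin (d l)) ℂ) :
    tens X * tens Y = tens (X * Y) := by
  ext i j
  simp only [mul_apply, tens, of_apply, Pi.mul_apply]
  rw [Fintype.prod_sum fun l k => X l (i l) k * Y l k (j l)]
  exact Finset.sum_congr rfl fun c _ => Finset.prod_mul_distrib.symm

theorem tens_one : tens (1 : ∀ l, Matrix (Fin (d l)) (Fin (d l)) ℂ) = 1 := by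
  ext i j
  simp only [tens, of_apply, Pi.one_apply, one_apply]
  split_ifs with h
  · simp [h]
  · obtain ⟨l, hl⟩ := Function.ne_iff.mp h
    exact Finset.prod_eq_zero (Finset.mem_univ l) (if_neg hl)

theorem tens_conjTranspose (X : ∀ l, Matrix (Fin (d l)) (Fin (d l)) ℂ) :
    (tens X)ᴴ = tens (star X) := by
  ext i j
  simp only [tens, conjTranspose_apply, of_apply, Pi.star_apply, star_apply, star_prod]

theorem tens_smul (c : Fin L → ℂ) (X : ∀ l, Matrix (Fin (d l)) (Fin (d l)) ℂ) :
    tens (fun l => c l • X l) = (∏ l, c l) • tens X := by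
  ext i j
  simp only [tens, of_apply, Matrix.smul_apply, smul_eq_mul, Finset.prod_mul_distrib]

open scoped MatrixOrder in
theorem tens_posSemidef {X : ∀ l, Matrix (Fin (d l)) (Fin (d l)) ℂ}
    (hX : ∀ l, (X l).PosSemidef) : (tens X).PosSemidef := by
  choose B hB using fun l => CStarAlgebra.nonneg_iff_eq_star_mul_self.mp (hX l).nonneg
  obtain rfl : X = star B * B := funext hB
  rw [← tens_mul, ← tens_conjTranspose]
  exact posSemidef_conjTranspose_mul_self _

theorem tens_update_apply (X : ∀ l, Matrix (Fin (d l)) (Fin (d l)) ℂ) (l : Fin L)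
    (Y : Matrix (Fin (d l)) (Fin (d l)) ℂ) (i j : ∀ l, Fin (d l)) :
    tens (update X l Y) i j = Y (i l) (j l) * ∏ k ∈ {l}ᶜ, X k (i k) (j k) := by
  rw [tens, of_apply, Fintype.prod_eq_mul_prod_compl l, update_self]
  congr 1
  refine Finset.prod_congr rfl fun k hk => ?_
  rw [update_of_ne (Finset.mem_compl.1 hk ∘ Finset.mem_singleton.2)]

theorem tens_update_sub (X : ∀ l, Matrix (Fin (d l)) (Fin (d l)) ℂ) (l : Fin L)
    (Y Z : Matrix (Fin (d l)) (Fin (d l)) ℂ) :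
    tens (update X l (Y - Z)) = tens (update X l Y) - tens (update X l Z) := by
  ext i j
  simp only [Matrix.sub_apply, tens_update_apply, sub_mul]

theorem tens_update_one_mul (l : Fin L) (Y : Matrix (Fin (d l)) (Fin (d l)) ℂ)
    (W : ∀ l, Matrix (Fin (d l)) (Fin (d l)) ℂ) :
    tens (update 1 l Y) * tens W = tens (update W l (Y * W l)) := by
  rw [tens_mul]
  congr 1
  funext k
  rcases eq_or_ne k l with rfl | hk
  · simp
  · simp [hk]

theorem posSemidef_tens_sub_tens {X Y : ∀ l, Matrix (Fin (d l)) (Fin (d l)) ℂ}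
    (hY : ∀ l, (Y l).PosSemidef) (hXY : ∀ l, (X l - Y l).PosSemidef) :
    (tens X - tens Y).PosSemidef := by
  have hX : ∀ l, (X l).PosSemidef := fun l => by simpa using (hXY l).add (hY l)
  suffices ∀ s : Finset (Fin L), (tens X - tens (s.piecewise Y X)).PosSemidef by
    simpa using this Finset.univ
  intro s
  induction s using Finset.induction_on with
  | empty => simpa using PosSemidef.zero
  | insert l s hl ih =>
    set W := s.piecewise Y X
    have hW : ∀ k, (W k).PosSemidef := fun k => by
      by_cases hk : k ∈ s
      · simpa [W, Finset.piecewise_eq_of_mem _ _ _ hk] using hY k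
      · simpa [W, Finset.piecewise_eq_of_notMem _ _ _ hk] using hX k
    have hstep : tens W - tens ((insert l s).piecewise Y X) = tens (update W l (X l - Y l)) := by
      rw [tens_update_sub, Finset.piecewise_insert,
        show X l = W l from (Finset.piecewise_eq_of_notMem _ _ _ hl).symm, update_eq_self]
    rw [← sub_add_sub_cancel _ (tens W), hstep]
    refine ih.add (tens_posSemidef fun k => ?_)
    rcases eq_or_ne k l with rfl | hk
    · simpa using hXY k
    · simpa [hk] using hW k

theorem tens_mul_eq_self_of_update {X : ∀ l, Matrix (Fin (d l)) (Fin (d l)) ℂ}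
    {F : Matrix (∀ l, Fin (d l)) (∀ l, Fin (d l)) ℂ}
    (h : ∀ l, tens (update 1 l (X l)) * F = F) : tens X * F = F := by
  suffices ∀ s : Finset (Fin L), tens (s.piecewise X 1) * F = F by
    simpa using this Finset.univ
  intro s
  induction s using Finset.induction_on with
  | empty => simp [tens_one]
  | insert l s hl ih =>
    have hsplit : tens ((insert l s).piecewise X 1) =
        tens (update 1 l (X l)) * tens (s.piecewise X 1) := by
      rw [tens_update_one_mul, Finset.piecewise_insert, Finset.piecewise_eq_of_notMem _ _ _ hl,
        Pi.one_apply, mul_one]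
    rw [hsplit, mul_assoc, ih, h]

theorem tens_update_sub_mul_eq_zero {a b : ∀ l, Matrix (Fin (d l)) (Fin (d l)) ℂ}
    (hb : ∀ l, (b l).PosSemidef) (hab : ∀ l, (a l - b l).PosSemidef)
    {E : Matrix (∀ l, Fin (d l)) (∀ l, Fin (d l)) ℂ} (hE : E.PosSemidef)
    (htr : ((tens a - tens b) * E).trace = 0) (l : Fin L) :
    tens (update a l (a l - b l)) * E = 0 := by
  have ha : ∀ k, (a k).PosSemidef := fun k => by simpa using (hab k).add (hb k)
  have hslot : (tens (update a l (a l - b l))).PosSemidef := tens_posSemidef fun k => by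
    rcases eq_or_ne k l with rfl | hk
    · simpa using hab k
    · simpa [hk] using ha k
  have hrest : (tens (update a l (b l)) - tens b).PosSemidef :=
    posSemidef_tens_sub_tens hb fun k => by
      rcases eq_or_ne k l with rfl | hk
      · simpa using PosSemidef.zero
      · simpa [hk] using hab k
  have hsplit : tens a - tens b =
      tens (update a l (a l - b l)) + (tens (update a l (b l)) - tens b) := by
    rw [tens_update_sub, update_eq_self]
    abel
  rw [hsplit, add_mul, trace_add] at htr
  have hzero := (add_eq_zero_iff_of_nonneg (hslot.trace_mul_nonneg hE)
    (hrest.trace_mul_nonneg hE)).1 htr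
  exact hslot.mul_eq_zero_of_trace_mul_eq_zero hE hzero.1

theorem tens_update_one_mul_compression_eq_zero
    {a b P : ∀ l, Matrix (Fin (d l)) (Fin (d l)) ℂ}
    (hb : ∀ l, (b l).PosSemidef) (hab : ∀ l, (a l - b l).PosSemidef)
    (hPidem : ∀ l, P l * P l = P l)
    (hPker : ∀ l, LinearMap.ker (P l).mulVecLin = LinearMap.ker (a l).mulVecLin)
    {E : Matrix (∀ l, Fin (d l)) (∀ l, Fin (d l)) ℂ} (l : Fin L)
    (hslot : tens (update a l (a l - b l)) * E = 0) :
    tens (update 1 l (a l - b l)) * (tens P * E * tens P) = 0 := by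
  choose R hR using fun k => exists_eq_mul_of_ker_le (hPker k).ge
  have hAP : (a l - b l) * P l = a l - b l := by
    refine mul_eq_self_of_ker_le (hPidem l) fun v hv => ?_
    rw [hPker] at hv
    have hbv := (hb l).ker_le_ker_of_sub (hab l) hv
    simp only [LinearMap.mem_ker, mulVecLin_apply] at hv hbv ⊢
    rw [sub_mulVec, hv, hbv, sub_zero]
  have hfactor : tens (update 1 l (a l - b l)) * tens P =
      tens (update R l 1) * tens (update a l (a l - b l)) := by
    rw [tens_mul, tens_mul]
    congr 1
    funext k
    rcases eq_or_ne k l with rfl | hk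
    · simp [hAP]
    · simp [hk, hR k]
  calc tens (update 1 l (a l - b l)) * (tens P * E * tens P)
      = tens (update R l 1) * (tens (update a l (a l - b l)) * E) * tens P := by
        rw [← mul_assoc, ← mul_assoc, hfactor, mul_assoc _ _ E]
    _ = 0 := by rw [hslot, mul_zero, zero_mul]

theorem tens_update_one_mul_eq_self_of_range_eq_ker {l : Fin L}
    {A Q : Matrix (Fin (d l)) (Fin (d l)) ℂ} (hQ : Q * Q = Q)
    (hQA : LinearMap.range Q.mulVecLin = LinearMap.ker A.mulVecLin)
    {F : Matrix (∀ l, Fin (d l)) (∀ l, Fin (d l)) ℂ} (hF : tens (update 1 l A) * F = 0) :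
    tens (update 1 l Q) * F = F := by
  obtain ⟨R, hR⟩ : ∃ R, 1 - Q = R * A := exists_eq_mul_of_ker_le fun v hv => by
    obtain ⟨u, rfl⟩ := hQA.ge hv
    simp [mulVec_mulVec, hQ]
  have hsplit : 1 - tens (update 1 l Q) = tens (update 1 l R) * tens (update 1 l A) := by
    rw [tens_update_one_mul, update_self, update_idem, ← hR, tens_update_sub, update_one, tens_one]
  have hkill : (1 - tens (update 1 l Q)) * F = 0 := by rw [hsplit, mul_assoc, hF, mul_zero]
  rwa [sub_mul, one_mul, sub_eq_zero, eq_comm] at hkill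

theorem tens_mul_compression_mul_tens_eq
    {a b P Q : ∀ l, Matrix (Fin (d l)) (Fin (d l)) ℂ}
    (hb : ∀ l, (b l).PosSemidef) (hab : ∀ l, (a l - b l).PosSemidef)
    (hPherm : ∀ l, (P l).IsHermitian) (hPidem : ∀ l, P l * P l = P l)
    (hPker : ∀ l, LinearMap.ker (P l).mulVecLin = LinearMap.ker (a l).mulVecLin)
    (hQherm : ∀ l, (Q l).IsHermitian) (hQidem : ∀ l, Q l * Q l = Q l)
    (hQrange : ∀ l, LinearMap.range (Q l).mulVecLin = LinearMap.ker (a l - b l).mulVecLin)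
    {E : Matrix (∀ l, Fin (d l)) (∀ l, Fin (d l)) ℂ} (hE : E.PosSemidef)
    (htr : ((tens a - tens b) * E).trace = 0) :
    tens Q * (tens P * E * tens P) * tens Q = tens P * E * tens P := by
  have hQF : tens Q * (tens P * E * tens P) = tens P * E * tens P :=
    tens_mul_eq_self_of_update fun l =>
      tens_update_one_mul_eq_self_of_range_eq_ker (hQidem l) (hQrange l) <|
        tens_update_one_mul_compression_eq_zero hb hab hPidem hPker l <|
          tens_update_sub_mul_eq_zero hb hab hE htr l
  have hPH : (tens P)ᴴ = tens P := by rw [tens_conjTranspose]; exact congrArg tens (funext hPherm)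
  have hQH : (tens Q)ᴴ = tens Q := by rw [tens_conjTranspose]; exact congrArg tens (funext hQherm)
  have hFQ := congrArg conjTranspose hQF
  simp only [conjTranspose_mul, hPH, hQH, hE.isHermitian.eq, ← mul_assoc] at hFQ
  rw [hQF, hFQ]

end TensorProduct

theorem stmt_16_general {L : ℕ} {d n : Fin L → ℕ}
    (η : ∀ l, Fin (n l) → ℝ)
    (ρ : ∀ l, Fin (n l) → Matrix (Fin (d l)) (Fin (d l)) ℂ)
    (hη : ∀ l i, 0 < η l i) (hηsum : ∀ l, ∑ i, η l i = 1)
    (hρ : ∀ l i, (ρ l i).PosSemidef) (hρtr : ∀ l i, (ρ l i).trace = 1)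
    (ρ₀ : ∀ l, Matrix (Fin (d l)) (Fin (d l)) ℂ)
    (hρ₀ : ∀ l, ρ₀ l = ∑ i, (η l i : ℂ) • ρ l i)
    (C : ∀ l, Fin (n l) → ℝ)
    (hC : ∀ l i, IsLeast { q : ℝ | ((q : ℂ) • ρ₀ l - (η l i : ℂ) • ρ l i).PosSemidef } (C l i)) (x : ∀ l, Fin (n l))
    (P : ∀ l, Matrix (Fin (d l)) (Fin (d l)) ℂ)
    (hPherm : ∀ l, (P l).IsHermitian) (hPidem : ∀ l, P l * P l = P l)
    (hPrange : ∀ l, LinearMap.range (P l).mulVecLin = LinearMap.range (ρ₀ l).mulVecLin)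
    (Q : ∀ l, Matrix (Fin (d l)) (Fin (d l)) ℂ)
    (hQherm : ∀ l, (Q l).IsHermitian) (hQidem : ∀ l, Q l * Q l = Q l)
    (hQrange : ∀ l, LinearMap.range (Q l).mulVecLin =
      LinearMap.ker ((C l (x l) : ℂ) • ρ₀ l - (η l (x l) : ℂ) • ρ l (x l)).mulVecLin)
    (E : Matrix (∀ l, Fin (d l)) (∀ l, Fin (d l)) ℂ) (hE : E.PosSemidef)
    (hEmc : ((((∏ l, C l (x l) : ℝ) : ℂ) • tens ρ₀ -
        ((∏ l, η l (x l) : ℝ) : ℂ) • tens (fun l => ρ l (x l))) * E).trace = 0) :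
    tens Q * (tens P * E * tens P) * tens Q = tens P * E * tens P := by
  have hηρ : ∀ l i, ((η l i : ℂ) • ρ l i).PosSemidef := fun l i =>
    (hρ l i).smul (Complex.zero_le_real.2 (hη l i).le)
  have hρ₀psd : ∀ l, (ρ₀ l).PosSemidef := fun l => by
    rw [hρ₀ l]
    exact posSemidef_sum _ fun i _ => hηρ l i
  have hρ₀tr : ∀ l, (ρ₀ l).trace = 1 := fun l => by
    simp [hρ₀ l, trace_sum, trace_smul, hρtr, ← Complex.ofReal_sum, hηsum]
  have hCpos : ∀ l, 0 < C l (x l) := fun l => (hη l (x l)).trans_le <|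
    le_of_posSemidef_smul_sub_smul (hρ₀tr l) (hρtr l (x l)) (hC l (x l)).1
  have hPker : ∀ l, LinearMap.ker (P l).mulVecLin = LinearMap.ker (ρ₀ l).mulVecLin := fun l =>
    le_antisymm ((hρ₀psd l).isHermitian.ker_le_ker_of_range_le (hPherm l) (hPrange l).ge)
      ((hPherm l).ker_le_ker_of_range_le (hρ₀psd l).isHermitian (hPrange l).le)
  refine tens_mul_compression_mul_tens_eq (a := fun l => (C l (x l) : ℂ) • ρ₀ l)
    (fun l => hηρ l (x l)) (fun l => (hC l (x l)).1) hPherm hPidem (fun l => ?_)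
    hQherm hQidem hQrange hE ?_
  · ext v
    simp [hPker l, (hCpos l).ne']
  · rwa [tens_smul, tens_smul, ← Complex.ofReal_prod, ← Complex.ofReal_prod]

/-- for E ∈ M_x⃗(⊗_l E^l), the compression Π E Π is invariant under
conjugation by ⊗_l Π_{x_l}^⊥, where Π = ⊗_l Π(E^l) is the support projection of
ρ₀ = ⊗_l ρ₀^l and Π_{x_l}^⊥ projects onto the kernel of C_{x_l} ρ₀^l − η_{x_l} ρ_{x_l}. -/
theorem stmt_16 {L : ℕ} (hL : 0 < L) {d n : Fin L → ℕ}
    (hd : ∀ l, 0 < d l) (hn : ∀ l, 0 < n l)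
    (η : ∀ l, Fin (n l) → ℝ)
    (ρ : ∀ l, Fin (n l) → Matrix (Fin (d l)) (Fin (d l)) ℂ)
    (hη : ∀ l i, 0 < η l i) (hηsum : ∀ l, ∑ i, η l i = 1)
    (hρ : ∀ l i, (ρ l i).PosSemidef) (hρtr : ∀ l i, (ρ l i).trace = 1)
    (ρ₀ : ∀ l, Matrix (Fin (d l)) (Fin (d l)) ℂ)
    (hρ₀ : ∀ l, ρ₀ l = ∑ i, (η l i : ℂ) • ρ l i)
    (C : ∀ l, Fin (n l) → ℝ)
    (hC : ∀ l i, IsLeast { q : ℝ | ((q : ℂ) • ρ₀ l - (η l i : ℂ) • ρ l i).PosSemidef } (C l i)) (x : ∀ l, Fin (n l))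
    (P : ∀ l, Matrix (Fin (d l)) (Fin (d l)) ℂ)
    (hPherm : ∀ l, (P l).IsHermitian) (hPidem : ∀ l, P l * P l = P l)
    (hPrange : ∀ l, LinearMap.range (P l).mulVecLin = LinearMap.range (ρ₀ l).mulVecLin)
    (Q : ∀ l, Matrix (Fin (d l)) (Fin (d l)) ℂ)
    (hQherm : ∀ l, (Q l).IsHermitian) (hQidem : ∀ l, Q l * Q l = Q l)
    (hQrange : ∀ l, LinearMap.range (Q l).mulVecLin =
      LinearMap.ker ((C l (x l) : ℂ) • ρ₀ l - (η l (x l) : ℂ) • ρ l (x l)).mulVecLin)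
    (E : Matrix (∀ l, Fin (d l)) (∀ l, Fin (d l)) ℂ) (hE : E.PosSemidef)
    (hEmc : ((((∏ l, C l (x l) : ℝ) : ℂ) • tens ρ₀ -
        ((∏ l, η l (x l) : ℝ) : ℂ) • tens (fun l => ρ l (x l))) * E).trace = 0) :
    tens Q * (tens P * E * tens P) * tens Q = tens P * E * tens P :=
  stmt_16_general η ρ hη hηsum hρ hρtr ρ₀ hρ₀ C hC x P hPherm hPidem hPrange Q hQherm hQidem hQrange
    E hE hEmc
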